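/- arXiv:2512.13647 — 2 statements merged into one kernel-verified Lean document; each statement's English description precedes it below -/
import Mathlib

section
/- Let E be a real inner product space and let φ : E → ℝ be differentiable, L-smooth (gradient L-Lipschitz) and μ-strongly convex with μ > 0, attaining its minimum value φ*. Fix γ with 0 < γ ≤ 1/L and a ∈ (0,1). For any θ ∈ E and any error vector e ∈ E, the inexact gradient step θ⁺ = θ − γ(∇φ(θ) + e) satisfies φ(θ⁺) − φ* ≤ (1 − μγ)(φ(θ) − φ*) + (γ/(2a) + Lγ²/2) ‖e‖². -/
/-!
Smoothness gives the quadratic upper bound `φ(θ + v) ≤ φ(θ) + ⟪∇φ(θ), v⟫ + (L/2)‖v‖²`, which we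
apply with `v = -γ(∇φ(θ) + e)`. Since `γL ≤ 1`, the cross term `⟪∇φ(θ), e⟫` enters with the
nonnegative weight `γ - Lγ²` and is absorbed by Young's inequality with parameter `a`, leaving a
descent `-(γ/2)‖∇φ(θ)‖²`. Strong convexity gives the Polyak–Łojasiewicz inequality
`μ(φ(θ) - φ*) ≤ ‖∇φ(θ)‖²/2`, which turns this descent into the contraction factor `1 - μγ`.
-/

open scoped RealInnerProductSpace

section Gradient

variable {E : Type*} [NormedAddCommGroup E] [InnerProductSpace ℝ E] {φ : E → ℝ} {φ' : E → E}
  {L μ : ℝ}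

theorem le_add_inner_add_sq_of_lipschitz_gradient
    (hdiff : ∀ θ, HasFDerivAt φ (innerSL ℝ (φ' θ)) θ)
    (hsmooth : ∀ θ θ', ‖φ' θ' - φ' θ‖ ≤ L * ‖θ' - θ‖) (x v : E) :
    φ (x + v) ≤ φ x + ⟪φ' x, v⟫ + L / 2 * ‖v‖ ^ 2 := by
  have hline : ∀ t : ℝ, HasDerivAt (fun t : ℝ => φ (x + t • v)) ⟪φ' (x + t • v), v⟫ t := by
    intro t
    have hpath : HasDerivAt (fun t : ℝ => x + t • v) v t := by
      simpa using ((hasDerivAt_id t).smul_const v).const_add x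
    exact (hdiff (x + t • v)).comp_hasDerivAt t hpath
  have hbound : ∀ t : ℝ, HasDerivAt (fun t : ℝ => φ x + t * ⟪φ' x, v⟫ + L / 2 * t ^ 2 * ‖v‖ ^ 2)
      (⟪φ' x, v⟫ + L * t * ‖v‖ ^ 2) t := by
    intro t
    refine ((((hasDerivAt_id' t).mul_const ⟪φ' x, v⟫).const_add (φ x)).add
      (((hasDerivAt_pow 2 t).const_mul (L / 2)).mul_const (‖v‖ ^ 2))).congr_deriv ?_
    push_cast
    ring
  have hslope : ∀ t ∈ Set.Ico (0 : ℝ) 1,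
      ⟪φ' (x + t • v), v⟫ ≤ ⟪φ' x, v⟫ + L * t * ‖v‖ ^ 2 := by
    rintro t ⟨ht, -⟩
    have hlip : ‖φ' (x + t • v) - φ' x‖ ≤ L * (t * ‖v‖) := by
      simpa [norm_smul, abs_of_nonneg ht] using hsmooth x (x + t • v)
    calc ⟪φ' (x + t • v), v⟫ = ⟪φ' x, v⟫ + ⟪φ' (x + t • v) - φ' x, v⟫ := by
          rw [inner_sub_left]; ring
      _ ≤ ⟪φ' x, v⟫ + ‖φ' (x + t • v) - φ' x‖ * ‖v‖ := by gcongr; exact real_inner_le_norm _ _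
      _ ≤ ⟪φ' x, v⟫ + L * (t * ‖v‖) * ‖v‖ := by gcongr
      _ = ⟪φ' x, v⟫ + L * t * ‖v‖ ^ 2 := by ring
  have h := image_le_of_deriv_right_le_deriv_boundary
    (fun t _ => (hline t).continuousAt.continuousWithinAt)
    (fun t _ => (hline t).hasDerivWithinAt) (by simp)
    (fun t _ => (hbound t).continuousAt.continuousWithinAt)
    (fun t _ => (hbound t).hasDerivWithinAt) hslope (Set.right_mem_Icc.2 zero_le_one)
  simpa using h

theorem mul_sub_le_sq_norm_gradient_div_two (hμ : 0 ≤ μ)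
    (hsc : ∀ θ θ', φ θ' ≥ φ θ + ⟪φ' θ, θ' - θ⟫ + μ / 2 * ‖θ' - θ‖ ^ 2) (x y : E) :
    μ * (φ x - φ y) ≤ ‖φ' x‖ ^ 2 / 2 := by
  have hcs : -(‖φ' x‖ * ‖y - x‖) ≤ ⟪φ' x, y - x⟫ :=
    neg_le_of_abs_le (abs_real_inner_le_norm _ _)
  have hgap : φ x - φ y ≤ ‖φ' x‖ * ‖y - x‖ - μ / 2 * ‖y - x‖ ^ 2 := by linarith [hsc x y]
  calc μ * (φ x - φ y) ≤ μ * (‖φ' x‖ * ‖y - x‖ - μ / 2 * ‖y - x‖ ^ 2) := by gcongr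
    _ ≤ ‖φ' x‖ ^ 2 / 2 := by nlinarith [sq_nonneg (‖φ' x‖ - μ * ‖y - x‖)]

end Gradient

theorem neg_inner_le_young {E : Type*} [NormedAddCommGroup E] [InnerProductSpace ℝ E]
    {a : ℝ} (ha : 0 < a) (x y : E) :
    -⟪x, y⟫ ≤ a / 2 * ‖x‖ ^ 2 + ‖y‖ ^ 2 / (2 * a) := by
  have hcs : -(‖x‖ * ‖y‖) ≤ ⟪x, y⟫ := neg_le_of_abs_le (abs_real_inner_le_norm _ _)
  have hamgm : ‖x‖ * ‖y‖ ≤ a / 2 * ‖x‖ ^ 2 + ‖y‖ ^ 2 / (2 * a) := by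
    rw [← sub_nonneg]
    have hsq : a / 2 * ‖x‖ ^ 2 + ‖y‖ ^ 2 / (2 * a) - ‖x‖ * ‖y‖
        = (a * ‖x‖ - ‖y‖) ^ 2 / (2 * a) := by
      field_simp; ring
    rw [hsq]; positivity
  linarith

/-- The estimate in scalar form: `G = ‖∇φ(θ)‖`, `R = ‖e‖`, `p = ⟪∇φ(θ), e⟫`, `f = φ(θ) - φ*`. -/
theorem inexact_step_bound_of_young_of_pl {L μ γ a G R p f : ℝ} (hL : 0 ≤ L) (hγ : 0 < γ)
    (hLγ : L * γ ≤ 1) (ha0 : 0 < a) (ha1 : a < 1)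
    (hyoung : -p ≤ a / 2 * G ^ 2 + R ^ 2 / (2 * a)) (hpl : μ * f ≤ G ^ 2 / 2) :
    f - γ * (G ^ 2 + p) + L / 2 * γ ^ 2 * (G ^ 2 + 2 * p + R ^ 2)
      ≤ (1 - μ * γ) * f + (γ / (2 * a) + L * γ ^ 2 / 2) * R ^ 2 := by
  have hβ : 0 ≤ γ - L * γ ^ 2 := by nlinarith
  have hR : 0 ≤ R ^ 2 / (2 * a) := by positivity
  have hsplit : γ / (2 * a) * R ^ 2 = γ * (R ^ 2 / (2 * a)) := by ring
  nlinarith [mul_le_mul_of_nonneg_left hyoung hβ, mul_le_mul_of_nonneg_left hpl hγ.le,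
    mul_nonneg (mul_nonneg hL (sq_nonneg γ)) hR,
    mul_nonneg (mul_nonneg hβ (sub_nonneg.2 ha1.le)) (sq_nonneg G)]

theorem inexact_gradient_step_general {E : Type*} [NormedAddCommGroup E] [InnerProductSpace ℝ E]
    (φ : E → ℝ) (φ' : E → E) (L μ : ℝ) (hμ : 0 < μ)
    (hdiff : ∀ θ : E, HasFDerivAt φ (innerSL ℝ (φ' θ)) θ)
    (hsmooth : ∀ θ θ' : E, ‖φ' θ' - φ' θ‖ ≤ L * ‖θ' - θ‖)
    (hsc : ∀ θ θ' : E, φ θ' ≥ φ θ + ⟪φ' θ, θ' - θ⟫ + μ / 2 * ‖θ' - θ‖ ^ 2)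
    (φstar : ℝ) (θstar : E) (hatt : φ θstar = φstar)
    (γ a : ℝ) (hγ0 : 0 < γ) (hγL : γ ≤ 1 / L) (ha0 : 0 < a) (ha1 : a < 1)
    (θ e : E) :
    φ (θ - γ • (φ' θ + e)) - φstar
      ≤ (1 - μ * γ) * (φ θ - φstar) + (γ / (2 * a) + L * γ ^ 2 / 2) * ‖e‖ ^ 2 := by
  have hL : 0 < L := one_div_pos.1 (hγ0.trans_le hγL)
  have hLγ : L * γ ≤ 1 := by rwa [le_div_iff₀ hL, mul_comm] at hγL
  have hdesc := le_add_inner_add_sq_of_lipschitz_gradient hdiff hsmooth θ (-(γ • (φ' θ + e)))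
  rw [← sub_eq_add_neg, inner_neg_right, norm_neg, inner_smul_right, inner_add_right,
    real_inner_self_eq_norm_sq, norm_smul, mul_pow, Real.norm_eq_abs, sq_abs,
    norm_add_sq_real] at hdesc
  have hpl := mul_sub_le_sq_norm_gradient_div_two hμ.le hsc θ θstar
  rw [hatt] at hpl
  have hscalar := inexact_step_bound_of_young_of_pl hL.le hγ0 hLγ ha0 ha1
    (neg_inner_le_young ha0 (φ' θ) e) hpl
  linarith

/-- **Inexact gradient step (deterministic FedAvg half-step).** Let `E` be a real inner
product space and `φ : E → ℝ` be differentiable with gradient `φ'`, `L`-smooth and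
`μ`-strongly convex (`μ > 0`), attaining its minimum value `φ*`. Fix `0 < γ ≤ 1/L` and
`a ∈ (0,1)`. For any `θ` and any error vector `e`, the inexact step
`θ⁺ = θ - γ (∇φ(θ) + e)` satisfies
`φ(θ⁺) - φ* ≤ (1 - μγ)(φ(θ) - φ*) + (γ/(2a) + Lγ²/2) ‖e‖²`. -/
theorem inexact_gradient_step {E : Type*} [NormedAddCommGroup E] [InnerProductSpace ℝ E]
    (φ : E → ℝ) (φ' : E → E) (L μ : ℝ) (hμ : 0 < μ)
    (hdiff : ∀ θ : E, HasFDerivAt φ (innerSL ℝ (φ' θ)) θ)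
    (hsmooth : ∀ θ θ' : E, ‖φ' θ' - φ' θ‖ ≤ L * ‖θ' - θ‖)
    (hsc : ∀ θ θ' : E, φ θ' ≥ φ θ + ⟪φ' θ, θ' - θ⟫ + μ / 2 * ‖θ' - θ‖ ^ 2)
    (φstar : ℝ) (θstar : E) (hlb : ∀ θ : E, φstar ≤ φ θ) (hatt : φ θstar = φstar)
    (γ a : ℝ) (hγ0 : 0 < γ) (hγL : γ ≤ 1 / L) (ha0 : 0 < a) (ha1 : a < 1)
    (θ e : E) :
    φ (θ - γ • (φ' θ + e)) - φstar
      ≤ (1 - μ * γ) * (φ θ - φstar) + (γ / (2 * a) + L * γ ^ 2 / 2) * ‖e‖ ^ 2 :=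
  inexact_gradient_step_general φ φ' L μ hμ hdiff hsmooth hsc φstar θstar hatt γ a hγ0 hγL ha0 ha1 θ
    e
end

section
/- Let E be a real inner product space and let φ : E → ℝ be differentiable, L-smooth (gradient L-Lipschitz) and μ-strongly convex with μ > 0, attaining its minimum value φ*. Fix γ_g, γ_r with 0 < γ_g ≤ 1/L, 0 < γ_r ≤ 1/L, an integer r ≥ 1, and a ∈ (0,1). Given θ_t ∈ E and an error vector e_t ∈ E, define the half-step θ⁺ = θ_t − γ_g(∇φ(θ_t) + e_t), and let θ_{t+1} be the result of r exact gradient steps of size γ_r applied to θ⁺ (i.e. iterating θ ↦ θ − γ_r ∇φ(θ) exactly r times). Then φ(θ_{t+1}) − φ* ≤ (1 − μγ_g)(1 − μγ_r)^r (φ(θ_t) − φ*) + (1 − μγ_r)^r (γ_g/(2a) + Lγ_g²/2) ‖e_t‖². -/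
open scoped RealInnerProductSpace

/-! The aggregation step is a gradient step with an additive error `e`. By the descent lemma for
an `L`-smooth function and Young's inequality `|⟪g, e⟫| ≤ a/2 ‖g‖² + ‖e‖²/(2a)`, with `Lγ ≤ 1` and
`a ≤ 1` it still decreases `φ` by `γ/2 ‖∇φ‖²` up to an `O(‖e‖²)` error; the Polyak–Łojasiewicz
inequality `2μ (φ - φ*) ≤ ‖∇φ‖²` implied by strong convexity turns this decrease into the factor
`1 - μγ`. An exact retraining step is the case `e = 0`, and since `μ ≤ L` its factor `1 - μγ_r` is
nonnegative, so `r` of them contract by `(1 - μγ_r)^r`. -/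

theorem iterate_le_pow_mul {α R : Type*} [CommSemiring R] [PartialOrder R] [IsOrderedRing R]
    {T : α → α} {V : α → R} {c : R} (hc : 0 ≤ c) (hT : ∀ x, V (T x) ≤ c * V x) (n : ℕ) (x : α) :
    V (T^[n] x) ≤ c ^ n * V x := by
  induction n with
  | zero => simp
  | succ n ih =>
    calc V (T^[n + 1] x) ≤ c * V (T^[n] x) := by
          rw [Function.iterate_succ_apply']; exact hT _
      _ ≤ c * (c ^ n * V x) := mul_le_mul_of_nonneg_left ih hc
      _ = c ^ (n + 1) * V x := by ring

section GradientDescent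

variable {E : Type*} [NormedAddCommGroup E] [InnerProductSpace ℝ E] {f : E → ℝ} {f' : E → E}
  {L μ : ℝ}

theorem le_add_inner_add_sq_of_lipschitz_gradient_s7
    (hf : ∀ x, HasFDerivAt f (innerSL ℝ (f' x)) x)
    (hL : ∀ x y, ‖f' y - f' x‖ ≤ L * ‖y - x‖) (x y : E) :
    f y ≤ f x + ⟪f' x, y - x⟫ + L / 2 * ‖y - x‖ ^ 2 := by
  set v := y - x
  have hline : ∀ t : ℝ, HasDerivAt (fun t : ℝ => f (x + t • v)) ⟪f' (x + t • v), v⟫ t := by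
    intro t
    have hseg : HasDerivAt (fun t : ℝ => x + t • v) v t := by
      simpa using ((hasDerivAt_id t).smul_const v).const_add x
    exact (hf _).comp_hasDerivAt t hseg
  have hbound : ∀ t : ℝ, 0 ≤ t → ⟪f' (x + t • v), v⟫ ≤ ⟪f' x, v⟫ + L * t * ‖v‖ ^ 2 := by
    intro t ht
    calc ⟪f' (x + t • v), v⟫ = ⟪f' x, v⟫ + ⟪f' (x + t • v) - f' x, v⟫ := by
          rw [inner_sub_left]; ring
      _ ≤ ⟪f' x, v⟫ + ‖f' (x + t • v) - f' x‖ * ‖v‖ := by gcongr; exact real_inner_le_norm _ _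
      _ ≤ ⟪f' x, v⟫ + L * ‖(x + t • v) - x‖ * ‖v‖ := by gcongr; exact hL _ _
      _ = ⟪f' x, v⟫ + L * t * ‖v‖ ^ 2 := by
          rw [add_sub_cancel_left, norm_smul, Real.norm_of_nonneg ht]; ring
  have hquad : ∀ t : ℝ, HasDerivAt (fun t : ℝ => f x + t * ⟪f' x, v⟫ + L / 2 * ‖v‖ ^ 2 * t ^ 2)
      (⟪f' x, v⟫ + L * t * ‖v‖ ^ 2) t := by
    intro t
    refine ((((hasDerivAt_id' t).mul_const _).const_add (f x)).add
      ((hasDerivAt_pow 2 t).const_mul (L / 2 * ‖v‖ ^ 2))).congr_deriv ?_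
    push_cast; ring
  have hend := image_le_of_deriv_right_le_deriv_boundary (a := 0) (b := 1)
    (fun t _ => (hline t).continuousAt.continuousWithinAt)
    (fun t _ => (hline t).hasDerivWithinAt) (by simp)
    (fun t _ => (hquad t).continuousAt.continuousWithinAt)
    (fun t _ => (hquad t).hasDerivWithinAt) (fun t ht => hbound t ht.1)
    (Set.right_mem_Icc.2 zero_le_one)
  simpa [v] using hend

theorem two_mul_sub_le_norm_sq_of_strongConvex (hμ : 0 ≤ μ)
    (hsc : ∀ x y, f y ≥ f x + ⟪f' x, y - x⟫ + μ / 2 * ‖y - x‖ ^ 2) (x z : E) :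
    2 * μ * (f x - f z) ≤ ‖f' x‖ ^ 2 := by
  have hz := hsc x z
  have hinner : -⟪f' x, z - x⟫ ≤ ‖f' x‖ * ‖z - x‖ := by
    rw [← inner_neg_right, ← norm_neg (z - x)]
    exact real_inner_le_norm _ _
  nlinarith [sq_nonneg (‖f' x‖ - μ * ‖z - x‖)]

theorem le_of_strongConvex_of_lipschitz_gradient [Nontrivial E]
    (hL : ∀ x y, ‖f' y - f' x‖ ≤ L * ‖y - x‖)
    (hsc : ∀ x y, f y ≥ f x + ⟪f' x, y - x⟫ + μ / 2 * ‖y - x‖ ^ 2) : μ ≤ L := by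
  obtain ⟨v, hv⟩ := exists_ne (0 : E)
  have hmonotone : μ * ‖v‖ ^ 2 ≤ ⟪f' v - f' 0, v⟫ := by
    have h0v := hsc 0 v
    have hv0 := hsc v 0
    simp only [sub_zero, zero_sub, norm_neg, inner_neg_right] at h0v hv0
    rw [inner_sub_left]
    linarith
  have hlip : ⟪f' v - f' 0, v⟫ ≤ L * ‖v‖ ^ 2 := by
    calc ⟪f' v - f' 0, v⟫ ≤ ‖f' v - f' 0‖ * ‖v‖ := real_inner_le_norm _ _
      _ ≤ L * ‖v - 0‖ * ‖v‖ := by gcongr; exact hL 0 v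
      _ = L * ‖v‖ ^ 2 := by rw [sub_zero]; ring
  exact le_of_mul_le_mul_right (hmonotone.trans hlip) (by positivity)

theorem abs_real_inner_le_young {a : ℝ} (ha : 0 < a) (x y : E) :
    |⟪x, y⟫| ≤ a / 2 * ‖x‖ ^ 2 + ‖y‖ ^ 2 / (2 * a) := by
  have hsq : a / 2 * ‖x‖ ^ 2 + ‖y‖ ^ 2 / (2 * a) - ‖x‖ * ‖y‖ = (a * ‖x‖ - ‖y‖) ^ 2 / (2 * a) := by
    field_simp; ring
  have : 0 ≤ (a * ‖x‖ - ‖y‖) ^ 2 / (2 * a) := by positivity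
  linarith [abs_real_inner_le_norm x y]

theorem le_sub_norm_sq_of_inexact_gradient_step
    (hf : ∀ x, HasFDerivAt f (innerSL ℝ (f' x)) x)
    (hL : ∀ x y, ‖f' y - f' x‖ ≤ L * ‖y - x‖) (hL0 : 0 ≤ L) {γ a : ℝ} (hγ : 0 ≤ γ)
    (hLγ : L * γ ≤ 1) (ha0 : 0 < a) (ha1 : a ≤ 1) (x e : E) :
    f (x - γ • (f' x + e))
      ≤ f x - γ / 2 * ‖f' x‖ ^ 2 + (γ / (2 * a) + L * γ ^ 2 / 2) * ‖e‖ ^ 2 := by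
  have hdescent := le_add_inner_add_sq_of_lipschitz_gradient_s7 hf hL x (x - γ • (f' x + e))
  rw [sub_sub_cancel_left, inner_neg_right, norm_neg, norm_smul, Real.norm_of_nonneg hγ,
    real_inner_smul_right, inner_add_right, real_inner_self_eq_norm_sq, mul_pow,
    norm_add_sq_real] at hdescent
  have hyoung := neg_le_of_abs_le (abs_real_inner_le_young ha0 (f' x) e)
  have hcoef : 0 ≤ γ * (1 - L * γ) := mul_nonneg hγ (by linarith)
  have hslack : 0 ≤ γ * (1 - L * γ) * (1 - a) / 2 * ‖f' x‖ ^ 2 := by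
    have : 0 ≤ 1 - a := by linarith
    positivity
  have herror : 0 ≤ L * γ * γ * (‖e‖ ^ 2 / (2 * a)) := by positivity
  linear_combination hdescent + mul_le_mul_of_nonneg_left hyoung hcoef + hslack + herror

theorem inexact_gradient_step_sub_le (hf : ∀ x, HasFDerivAt f (innerSL ℝ (f' x)) x)
    (hL : ∀ x y, ‖f' y - f' x‖ ≤ L * ‖y - x‖) (hL0 : 0 ≤ L) (hμ : 0 ≤ μ)
    (hsc : ∀ x y, f y ≥ f x + ⟪f' x, y - x⟫ + μ / 2 * ‖y - x‖ ^ 2) {γ a : ℝ} (hγ : 0 ≤ γ)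
    (hLγ : L * γ ≤ 1) (ha0 : 0 < a) (ha1 : a ≤ 1) (x e z : E) :
    f (x - γ • (f' x + e)) - f z
      ≤ (1 - μ * γ) * (f x - f z) + (γ / (2 * a) + L * γ ^ 2 / 2) * ‖e‖ ^ 2 := by
  have hPL := mul_le_mul_of_nonneg_left
    (two_mul_sub_le_norm_sq_of_strongConvex hμ hsc x z) hγ
  linarith [le_sub_norm_sq_of_inexact_gradient_step hf hL hL0 hγ hLγ ha0 ha1 x e]

end GradientDescent

theorem reverb_fl_round_contraction_deterministic_general {E : Type*} [NormedAddCommGroup E]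
    [InnerProductSpace ℝ E]
    (φ : E → ℝ) (φ' : E → E) (L μ : ℝ) (hμ : 0 < μ)
    (hdiff : ∀ θ : E, HasFDerivAt φ (innerSL ℝ (φ' θ)) θ)
    (hsmooth : ∀ θ θ' : E, ‖φ' θ' - φ' θ‖ ≤ L * ‖θ' - θ‖)
    (hsc : ∀ θ θ' : E, φ θ' ≥ φ θ + ⟪φ' θ, θ' - θ⟫ + μ / 2 * ‖θ' - θ‖ ^ 2)
    (φstar : ℝ) (θstar : E) (hatt : φ θstar = φstar)
    (γg γr a : ℝ) (hγg0 : 0 < γg) (hγgL : γg ≤ 1 / L)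
    (hγr0 : 0 < γr) (hγrL : γr ≤ 1 / L)
    (r : ℕ) (ha0 : 0 < a) (ha1 : a < 1)
    (θt et : E) :
    φ ((fun θ : E => θ - γr • φ' θ)^[r] (θt - γg • (φ' θt + et))) - φstar
      ≤ (1 - μ * γg) * (1 - μ * γr) ^ r * (φ θt - φstar)
        + (1 - μ * γr) ^ r * (γg / (2 * a) + L * γg ^ 2 / 2) * ‖et‖ ^ 2 := by
  subst hatt
  rcases subsingleton_or_nontrivial E with hE | hE
  · rw [Subsingleton.elim et 0, Subsingleton.elim θt θstar, Subsingleton.elim (_^[r] _) θstar]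
    simp
  have hL : 0 < L := one_div_pos.mp (hγg0.trans_le hγgL)
  have hLγg : L * γg ≤ 1 := by rwa [le_div_iff₀ hL, mul_comm] at hγgL
  have hLγr : L * γr ≤ 1 := by rwa [le_div_iff₀ hL, mul_comm] at hγrL
  have hcontract : 0 ≤ 1 - μ * γr := by
    nlinarith [mul_le_mul_of_nonneg_right (le_of_strongConvex_of_lipschitz_gradient hsmooth hsc)
      hγr0.le]
  have hstep (θ : E) : φ (θ - γr • φ' θ) - φ θstar ≤ (1 - μ * γr) * (φ θ - φ θstar) := by
    simpa using inexact_gradient_step_sub_le hdiff hsmooth hL.le hμ.le hsc hγr0.le hLγr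
      one_pos le_rfl θ 0 θstar
  have hretrain := iterate_le_pow_mul (V := fun θ => φ θ - φ θstar) hcontract hstep r
    (θt - γg • (φ' θt + et))
  have haggregate := inexact_gradient_step_sub_le hdiff hsmooth hL.le hμ.le hsc hγg0.le hLγg ha0
    ha1.le θt et θstar
  calc _ ≤ (1 - μ * γr) ^ r * (φ (θt - γg • (φ' θt + et)) - φ θstar) := hretrain
    _ ≤ (1 - μ * γr) ^ r * ((1 - μ * γg) * (φ θt - φ θstar)
          + (γg / (2 * a) + L * γg ^ 2 / 2) * ‖et‖ ^ 2) := by gcongr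
    _ = _ := by ring

/-- **Round-wise contraction of REVERB-FL (deterministic case).** Let `E` be a real inner
product space and `φ : E → ℝ` be differentiable with gradient `φ'`, `L`-smooth and
`μ`-strongly convex (`μ > 0`), attaining its minimum value `φ*`. Fix `0 < γ_g ≤ 1/L`,
`0 < γ_r ≤ 1/L`, an integer `r ≥ 1`, and `a ∈ (0,1)`. Given `θ_t` and an error vector `e_t`,
set `θ⁺ = θ_t - γ_g (∇φ(θ_t) + e_t)` and let `θ_{t+1}` be the result of `r` exact gradient
steps of size `γ_r` from `θ⁺`. Then
`φ(θ_{t+1}) - φ* ≤ (1 - μγ_g)(1 - μγ_r)^r (φ(θ_t) - φ*)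
  + (1 - μγ_r)^r (γ_g/(2a) + Lγ_g²/2) ‖e_t‖²`. -/
theorem reverb_fl_round_contraction_deterministic {E : Type*} [NormedAddCommGroup E]
    [InnerProductSpace ℝ E]
    (φ : E → ℝ) (φ' : E → E) (L μ : ℝ) (hμ : 0 < μ)
    (hdiff : ∀ θ : E, HasFDerivAt φ (innerSL ℝ (φ' θ)) θ)
    (hsmooth : ∀ θ θ' : E, ‖φ' θ' - φ' θ‖ ≤ L * ‖θ' - θ‖)
    (hsc : ∀ θ θ' : E, φ θ' ≥ φ θ + ⟪φ' θ, θ' - θ⟫ + μ / 2 * ‖θ' - θ‖ ^ 2)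
    (φstar : ℝ) (θstar : E) (hlb : ∀ θ : E, φstar ≤ φ θ) (hatt : φ θstar = φstar)
    (γg γr a : ℝ) (hγg0 : 0 < γg) (hγgL : γg ≤ 1 / L)
    (hγr0 : 0 < γr) (hγrL : γr ≤ 1 / L)
    (r : ℕ) (hr : 1 ≤ r) (ha0 : 0 < a) (ha1 : a < 1)
    (θt et : E) :
    φ ((fun θ : E => θ - γr • φ' θ)^[r] (θt - γg • (φ' θt + et))) - φstar
      ≤ (1 - μ * γg) * (1 - μ * γr) ^ r * (φ θt - φstar)
        + (1 - μ * γr) ^ r * (γg / (2 * a) + L * γg ^ 2 / 2) * ‖et‖ ^ 2 :=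
  reverb_fl_round_contraction_deterministic_general φ φ' L μ hμ hdiff hsmooth hsc φstar θstar hatt
    γg γr a hγg0 hγgL hγr0 hγrL r ha0 ha1 θt et
end
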